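/- The noise-variance reduction from baseline subtraction satisfies the closed form: ΔVar = σ²∑_i a_i²E_i² - [∑_i a_i²Var[δ_i] + ∑_{i≠j} a_i a_j Cov[δ_i,δ_j]] = (σ²/s)(∑_i a_i)(∑_j a_j[2E_j² - \overline{E²}]), where \overline{E²} = (1/s)∑_k E_k². -/

import Mathlib

/-!
Both signals are a constant plus a linear combination `∑ c i * η i` of the independent noises,
so each noise variance is `σ² ∑ c i ²`. Baseline subtraction turns the coefficients
`c i = a i * E i` into `(a i - m) * E i` with `m = (1/s) ∑ a i`, and the difference of the two
quadratic forms factors as `m * (2 ∑ a i * E i ² - m ∑ E i ²)`.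
-/

open MeasureTheory ProbabilityTheory Finset

namespace ProbabilityTheory

variable {Ω ι : Type*} [MeasurableSpace Ω] {μ : Measure Ω} [Fintype ι] {η : ι → Ω → ℝ}

lemma iIndepFun.variance_sum_mul (hη : iIndepFun η μ) (hL2 : ∀ i, MemLp (η i) 2 μ)
    (c : ι → ℝ) :
    variance (fun ω => ∑ i, c i * η i ω) μ = ∑ i, c i ^ 2 * variance (η i) μ := by
  have hfun : (fun ω => ∑ i, c i * η i ω) = ∑ i, fun ω => c i * η i ω := by
    ext ω; simp
  rw [hfun, IndepFun.variance_sum (fun i _ => (hL2 i).const_mul (c i))]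
  · simp only [variance_const_mul]
  · intro i _ j _ hij
    exact (hη.indepFun hij).comp (measurable_const_mul (c i)) (measurable_const_mul (c j))

lemma iIndepFun.variance_const_add_sum_mul [IsProbabilityMeasure μ] (hη : iIndepFun η μ)
    (hL2 : ∀ i, MemLp (η i) 2 μ) (b : ℝ) (c : ι → ℝ) :
    variance (fun ω => b + ∑ i, c i * η i ω) μ = ∑ i, c i ^ 2 * variance (η i) μ := by
  rw [variance_const_add (aestronglyMeasurable_fun_sum _ fun i _ => (hL2 i).1.const_mul (c i)),
    hη.variance_sum_mul hL2]

end ProbabilityTheory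

lemma sum_mul_sq_sub_sum_sub_mul_sq {ι : Type*} (t : Finset ι) (x w : ι → ℝ) (m : ℝ) :
    ∑ i ∈ t, (x i * w i) ^ 2 - ∑ i ∈ t, ((x i - m) * w i) ^ 2
      = m * (2 * ∑ i ∈ t, x i * w i ^ 2 - m * ∑ i ∈ t, w i ^ 2) := by
  rw [← sum_sub_distrib, mul_sum, mul_sum, ← sum_sub_distrib, mul_sum]
  exact sum_congr rfl fun i _ => by ring

theorem baseline_noise_variance_reduction_general {Ω : Type*} [MeasurableSpace Ω]
    (μ : Measure Ω) [IsProbabilityMeasure μ]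
    (s : ℕ) (a En : Fin s → ℝ) (σ : ℝ)
    (η : Fin s → Ω → ℝ)
    (hindep : iIndepFun η μ)
    (hL2 : ∀ i, MemLp (η i) 2 μ)
    (hvar : ∀ i, variance (η i) μ = σ ^ 2) :
    variance (fun ω => ∑ i, a i * (En i * (1 + η i ω))) μ
      - variance (fun ω => ∑ i, a i *
          (En i * (1 + η i ω) - (s : ℝ)⁻¹ * ∑ j, En j * (1 + η j ω))) μ
      = (σ ^ 2 / s) * (∑ i, a i)
          * (∑ j, a j * (2 * (En j) ^ 2 - (s : ℝ)⁻¹ * ∑ k, (En k) ^ 2)) := by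
  set m := (s : ℝ)⁻¹ * ∑ i, a i with hm
  have hraw : (fun ω => ∑ i, a i * (En i * (1 + η i ω)))
      = fun ω => ∑ i, a i * En i + ∑ i, a i * En i * η i ω := by
    ext ω
    simp only [mul_add, mul_one, sum_add_distrib, mul_assoc]
  have hbase : (fun ω => ∑ i, a i *
          (En i * (1 + η i ω) - (s : ℝ)⁻¹ * ∑ j, En j * (1 + η j ω)))
      = fun ω => (∑ i, a i * En i - m * ∑ i, En i) + ∑ i, (a i - m) * En i * η i ω := by
    ext ω
    simp only [mul_sub, mul_add, sub_mul, mul_one, sum_sub_distrib, sum_add_distrib, mul_assoc,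
      ← mul_sum, ← sum_mul, hm]
    ring
  rw [hraw, hbase, hindep.variance_const_add_sum_mul hL2, hindep.variance_const_add_sum_mul hL2]
  simp only [hvar, ← sum_mul, ← sub_mul, sum_mul_sq_sub_sum_sub_mul_sq]
  simp only [mul_sub, sum_sub_distrib, ← mul_sum, mul_left_comm _ (2 : ℝ), ← sum_mul, hm]
  ring

theorem baseline_noise_variance_reduction {Ω : Type*} [MeasurableSpace Ω]
    (μ : Measure Ω) [IsProbabilityMeasure μ]
    (s : ℕ) (hs : 1 ≤ s) (a En : Fin s → ℝ) (σ : ℝ)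
    (η : Fin s → Ω → ℝ)
    (hindep : iIndepFun η μ)
    (hL2 : ∀ i, MemLp (η i) 2 μ)
    (hmean : ∀ i, ∫ ω, η i ω ∂μ = 0)
    (hvar : ∀ i, variance (η i) μ = σ ^ 2) :
    variance (fun ω => ∑ i, a i * (En i * (1 + η i ω))) μ
      - variance (fun ω => ∑ i, a i *
          (En i * (1 + η i ω) - (s : ℝ)⁻¹ * ∑ j, En j * (1 + η j ω))) μ
      = (σ ^ 2 / s) * (∑ i, a i)
          * (∑ j, a j * (2 * (En j) ^ 2 - (s : ℝ)⁻¹ * ∑ k, (En k) ^ 2)) :=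
  baseline_noise_variance_reduction_general μ s a En σ η hindep hL2 hvar
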